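/- arXiv:0811.3004 — 2 statements merged into one kernel-verified Lean document; each statement's English description precedes it below -/
import Mathlib

section
/- Let F be a characteristic-zero differential field whose field of constants C is algebraically closed, and let E ⊇ F be a no-new-constants differential field extension. Let x_1,…,x_n ∈ E satisfy x_i′ ∈ F for all i. Then either x_1,…,x_n are algebraically independent over F, or there exists a tuple (c_1,…,c_n) ∈ C^n ∖ {0} such that Σ_{i=1}^n c_i·x_i ∈ F (Ostrowski's theorem for antiderivatives). -/
/-!
If the `xᵢ` are algebraically dependent, choose a nonzero `P ∈ F[X₁, …, Xₙ]` with `P(x) = 0`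
minimizing first the total degree `d` and then the number of monomials of degree `d`, scaled so
that one such monomial `X^μ` has coefficient `1`. Differentiating `P(x) = 0` shows that the
prolongation `P' = P^D + Σ xᵢ' ∂P/∂Xᵢ` (with `P^D` obtained by differentiating the coefficients)
also vanishes at `x`. In degree `d` it agrees with `P^D`, which loses the monomial `X^μ`, so
minimality forces `P' = 0`. Then all degree-`d` coefficients of `P` are constants, and for
`X^μ = X^m Xᵢ` the coefficient of `X^m` in `P'` says that `P_m + Σⱼ (mⱼ + 1) P_{m+eⱼ} xⱼ` is a
constant, hence lies in `F`; its coefficient at `xᵢ` is `mᵢ + 1 ≠ 0`.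
-/

/-- A derivation on a field: an additive map satisfying the Leibniz rule. -/
structure IsDerivation {E : Type*} [Field E] (D : E → E) : Prop where
  map_add : ∀ a b : E, D (a + b) = D a + D b
  leibniz : ∀ a b : E, D (a * b) = D a * b + a * D b

open MvPolynomial Finsupp

namespace IsDerivation

variable {E : Type*} [Field E] {D : E → E}

def toDerivation (hD : IsDerivation D) : Derivation ℤ E E :=
  Derivation.mk' (AddMonoidHom.mk' D hD.map_add).toIntLinearMap fun a b => by
    simp only [AddMonoidHom.coe_toIntLinearMap, AddMonoidHom.mk'_apply, hD.leibniz, smul_eq_mul]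
    ring

@[simp]
lemma coe_toDerivation (hD : IsDerivation D) : ⇑hD.toDerivation = D := rfl

def restrict (hD : IsDerivation D) {F : Subfield E} (hF : ∀ a ∈ F, D a ∈ F) : F →+ F :=
  AddMonoidHom.mk' (fun a => ⟨D a, hF a a.2⟩) fun a b => Subtype.ext (hD.map_add a b)

lemma restrict_one (hD : IsDerivation D) {F : Subfield E} (hF : ∀ a ∈ F, D a ∈ F) :
    hD.restrict hF 1 = 0 :=
  Subtype.ext hD.toDerivation.map_one_eq_zero

lemma map_zero (hD : IsDerivation D) : D 0 = 0 :=
  hD.toDerivation.map_zero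

end IsDerivation

namespace MvPolynomial

variable {R σ : Type*} [CommRing R]

noncomputable def mapCoeffs (δ : R →+ R) : MvPolynomial σ R →+ MvPolynomial σ R :=
  AddMonoidAlgebra.coeffAddEquiv.symm.toAddMonoidHom.comp
    ((Finsupp.mapRange.addMonoidHom δ).comp AddMonoidAlgebra.coeffAddEquiv.toAddMonoidHom)

@[simp]
lemma coeff_mapCoeffs (δ : R →+ R) (p : MvPolynomial σ R) (m : σ →₀ ℕ) :
    coeff m (mapCoeffs δ p) = δ (coeff m p) := rfl

lemma mapCoeffs_C (δ : R →+ R) (a : R) : mapCoeffs δ (C a : MvPolynomial σ R) = C (δ a) := by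
  classical
  ext m
  rw [coeff_mapCoeffs, coeff_C, coeff_C, apply_ite δ, map_zero]

lemma mapCoeffs_mul_X (δ : R →+ R) (p : MvPolynomial σ R) (i : σ) :
    mapCoeffs δ (p * X i) = mapCoeffs δ p * X i := by
  classical
  ext m
  simp only [coeff_mapCoeffs, coeff_mul_X', apply_ite δ, map_zero]

lemma exists_degree_eq_totalDegree {p : MvPolynomial σ R} (hp : p ≠ 0) :
    ∃ μ ∈ p.support, μ.degree = p.totalDegree := by
  obtain ⟨μ, hμ, h⟩ := Finset.exists_mem_eq_sup p.support (support_nonempty.2 hp) Finsupp.degree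
  exact ⟨μ, hμ, h.symm⟩

noncomputable def degreeLex (p : MvPolynomial σ R) : ℕ ×ₗ ℕ :=
  toLex (p.totalDegree, (homogeneousComponent p.totalDegree p).support.card)

section Prolong

variable [Fintype σ] (δ : R →+ R) (u : σ → R)

/-- The prolongation of `δ` to the derivation of `R[X_σ]` sending `X i` to `u i`. -/
noncomputable def prolong (p : MvPolynomial σ R) : MvPolynomial σ R :=
  mapCoeffs δ p + ∑ i, C (u i) * pderiv i p

lemma prolong_add (p q : MvPolynomial σ R) :
    prolong δ u (p + q) = prolong δ u p + prolong δ u q := by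
  simp only [prolong, map_add, mul_add, Finset.sum_add_distrib]
  abel

lemma prolong_C (a : R) : prolong δ u (C a) = C (δ a) := by
  simp [prolong, mapCoeffs_C]

lemma prolong_mul_X (p : MvPolynomial σ R) (i : σ) :
    prolong δ u (p * X i) = prolong δ u p * X i + C (u i) * p := by
  classical
  have hX : ∑ j, C (u j) * (p * pderiv j (X i)) = C (u i) * p := by
    simp [pderiv_X, Pi.single_apply]
  simp only [prolong, mapCoeffs_mul_X, pderiv_mul, mul_add, Finset.sum_add_distrib, hX, add_mul,
    Finset.sum_mul, mul_assoc, add_assoc]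

lemma coeff_prolong (p : MvPolynomial σ R) (m : σ →₀ ℕ) :
    coeff m (prolong δ u p) =
      δ (coeff m p) + ∑ i, u i * (coeff (m + single i 1) p * (m i + 1)) := by
  simp only [prolong, coeff_add, coeff_mapCoeffs, coeff_sum, coeff_C_mul, coeff_pderiv]

lemma coeff_prolong_of_totalDegree_le {p : MvPolynomial σ R} {m : σ →₀ ℕ}
    (hm : p.totalDegree ≤ m.degree) : coeff m (prolong δ u p) = δ (coeff m p) := by
  have hshift (i : σ) : coeff (m + single i 1) p = 0 := by
    apply coeff_eq_zero_of_totalDegree_lt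
    change p.totalDegree < (m + single i 1).degree
    rw [map_add, degree_single]
    omega
  simp [coeff_prolong, hshift]

lemma totalDegree_prolong_le (p : MvPolynomial σ R) :
    (prolong δ u p).totalDegree ≤ p.totalDegree := by
  refine Finset.sup_le fun m hm => ?_
  by_contra! hlt
  rw [mem_support_iff, coeff_prolong_of_totalDegree_le δ u hlt.le,
    coeff_eq_zero_of_totalDegree_lt hlt, map_zero] at hm
  exact hm rfl

lemma apply_coeff_eq_zero_of_prolong_eq_zero {p : MvPolynomial σ R} (hp : prolong δ u p = 0)
    {m : σ →₀ ℕ} (hm : p.totalDegree ≤ m.degree) : δ (coeff m p) = 0 := by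
  rw [← coeff_prolong_of_totalDegree_le δ u hm, hp, coeff_zero]

lemma degreeLex_prolong_lt [Nontrivial R] {δ : R →+ R} (hδ : δ 1 = 0) (u : σ → R)
    {p : MvPolynomial σ R} {μ : σ →₀ ℕ} (hμ : μ.degree = p.totalDegree) (hpμ : coeff μ p = 1) :
    degreeLex (prolong δ u p) < degreeLex p := by
  refine Prod.Lex.toLex_lt_toLex'.2 ⟨totalDegree_prolong_le δ u p, fun hdeg => ?_⟩
  dsimp only at hdeg ⊢
  rw [hdeg]
  have hcoeff {m : σ →₀ ℕ} (hm : m.degree = p.totalDegree) :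
      coeff m (prolong δ u p) = δ (coeff m p) :=
    coeff_prolong_of_totalDegree_le δ u hm.ge
  refine Finset.card_lt_card ((Finset.ssubset_iff_of_subset fun m hm => ?_).2 ⟨μ, ?_, ?_⟩)
  · simp only [support_homogeneousComponent, Finset.mem_filter, mem_support_iff] at hm ⊢
    refine ⟨fun h => hm.1 ?_, hm.2⟩
    rw [hcoeff hm.2, h, map_zero]
  · simp [support_homogeneousComponent, hμ, hpμ]
  · simp [support_homogeneousComponent, hcoeff hμ, hpμ, hδ]

end Prolong

section Field

variable {K σ : Type*} [Field K]

lemma totalDegree_smul_of_ne_zero {c : K} (hc : c ≠ 0) (p : MvPolynomial σ K) :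
    (c • p).totalDegree = p.totalDegree := by
  rw [totalDegree, support_smul_eq hc, totalDegree]

lemma degreeLex_smul_of_ne_zero {c : K} (hc : c ≠ 0) (p : MvPolynomial σ K) :
    degreeLex (c • p) = degreeLex p := by
  rw [degreeLex, degreeLex, totalDegree_smul_of_ne_zero hc, map_smul, support_smul_eq hc]

theorem exists_prolong_eq_zero [Fintype σ] {δ : K →+ K} (hδ : δ 1 = 0) (u : σ → K)
    {I : Submodule K (MvPolynomial σ K)} (hI : ∀ p ∈ I, prolong δ u p ∈ I) (hI0 : I ≠ ⊥) :
    ∃ p ∈ I, ∃ μ : σ →₀ ℕ, μ.degree = p.totalDegree ∧ coeff μ p = 1 ∧ prolong δ u p = 0 := by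
  let S : Set (MvPolynomial σ K) := {p | p ∈ I ∧ p ≠ 0}
  have hS : S.Nonempty := Submodule.exists_mem_ne_zero_of_ne_bot hI0
  set p₀ := Function.argminOn degreeLex S hS
  obtain ⟨hp₀I, hp₀⟩ : p₀ ∈ S := Function.argminOn_mem degreeLex S hS
  obtain ⟨μ, hμ, hμdeg⟩ := exists_degree_eq_totalDegree hp₀
  have hc : (coeff μ p₀)⁻¹ ≠ 0 := inv_ne_zero (mem_support_iff.1 hμ)
  set p := (coeff μ p₀)⁻¹ • p₀
  have hpI : p ∈ I := I.smul_mem _ hp₀I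
  have hpμ : coeff μ p = 1 := by
    rw [coeff_smul, smul_eq_mul, inv_mul_cancel₀ (mem_support_iff.1 hμ)]
  have hμdeg' : μ.degree = p.totalDegree := by rw [totalDegree_smul_of_ne_zero hc, hμdeg]
  refine ⟨p, hpI, μ, hμdeg', hpμ, ?_⟩
  by_contra h
  apply Function.not_lt_argminOn degreeLex S ⟨hI p hpI, h⟩
  rw [← degreeLex_smul_of_ne_zero hc p₀]
  exact degreeLex_prolong_lt hδ u hμdeg' hpμ

end Field

end MvPolynomial

section Differential

variable {E σ : Type*} [Field E] [Fintype σ] {D : E → E} (hD : IsDerivation D)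
  {F : Subfield E} (hF : ∀ a ∈ F, D a ∈ F) {x : σ → E} (hx : ∀ i, D (x i) ∈ F)

theorem aeval_prolong (p : MvPolynomial σ F) :
    aeval x (prolong (hD.restrict hF) (fun i => ⟨D (x i), hx i⟩) p) = D (aeval x p) := by
  induction p using MvPolynomial.induction_on with
  | C a =>
    rw [prolong_C, aeval_C, aeval_C]
    rfl
  | add p q hp hq => rw [prolong_add, map_add, map_add, hp, hq, hD.map_add]
  | mul_X p i hp =>
    rw [prolong_mul_X, map_add, map_mul, map_mul, hp, aeval_X, aeval_C, map_mul, aeval_X,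
      hD.leibniz, mul_comm (aeval x p)]
    rfl

theorem apply_coeff_add_sum_eq_zero {p : MvPolynomial σ F}
    (hp : prolong (hD.restrict hF) (fun i => ⟨D (x i), hx i⟩) p = 0) (m : σ →₀ ℕ)
    (hm : ∀ j, D (coeff (m + single j 1) p : F) = 0) :
    D ((coeff m p : F) + ∑ j, ((coeff (m + single j 1) p : F) * (m j + 1) : E) * x j) = 0 := by
  have h := congrArg (fun q : MvPolynomial σ F => ((coeff m q : F) : E)) hp
  push_cast [coeff_prolong, coeff_zero] at h
  obtain ⟨δ, rfl⟩ : ∃ δ : Derivation ℤ E E, ⇑δ = D := ⟨_, hD.coe_toDerivation⟩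
  simp only [map_add, map_sum, Derivation.leibniz, smul_eq_mul, Derivation.map_natCast,
    Derivation.map_one_eq_zero, add_zero, mul_zero, hm]
  rw [← h]
  congr 1
  exact Finset.sum_congr rfl fun j _ => mul_comm _ _

theorem exists_const_sum_mul_mem_of_prolong_eq_zero [CharZero E]
    (hNNC : ∀ a : E, D a = 0 → a ∈ F) {p : MvPolynomial σ F}
    (hp : prolong (hD.restrict hF) (fun i => ⟨D (x i), hx i⟩) p = 0) {μ : σ →₀ ℕ}
    (hμ : μ.degree = p.totalDegree) (hpμ : coeff μ p = 1) (hμ0 : μ ≠ 0) :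
    ∃ c : σ → E, (∀ j, c j ∈ F ∧ D (c j) = 0) ∧ c ≠ 0 ∧ ∑ j, c j * x j ∈ F := by
  obtain ⟨i, hi⟩ : ∃ i, μ i ≠ 0 := by
    by_contra! h
    exact hμ0 (Finsupp.ext h)
  set m := μ - single i 1
  have hmi : m + single i 1 = μ :=
    tsub_add_cancel_of_le (single_le_iff.2 (Nat.one_le_iff_ne_zero.2 hi))
  have htop (j : σ) : D (coeff (m + single j 1) p : F) = 0 := by
    refine congrArg Subtype.val (apply_coeff_eq_zero_of_prolong_eq_zero _ _ hp ?_)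
    rw [← hμ, ← hmi, map_add, map_add, degree_single, degree_single]
  refine ⟨fun j => ((coeff (m + single j 1) p : F) * (m j + 1) : E), fun j => ⟨?_, ?_⟩, ?_, ?_⟩
  · exact F.mul_mem (coeff _ p).2 (F.add_mem (natCast_mem F _) F.one_mem)
  · rw [hD.leibniz, htop, zero_mul, zero_add, ← Nat.cast_succ, ← hD.coe_toDerivation,
      Derivation.map_natCast, mul_zero]
  · refine Function.ne_iff.2 ⟨i, ?_⟩
    simp [hmi, hpμ, Nat.cast_add_one_ne_zero]
  · have := F.sub_mem (hNNC _ (apply_coeff_add_sum_eq_zero hD hF hx hp m htop)) (coeff m p).2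
    simpa using this

end Differential

theorem ostrowski_antiderivatives_general
    {E : Type*} [Field E] [CharZero E]
    (D : E → E) (hD : IsDerivation D)
    (F : Subfield E) (hF : ∀ a ∈ F, D a ∈ F)
    (C : Subfield E) (hC : ∀ c : E, c ∈ C ↔ (c ∈ F ∧ D c = 0))
    (hNNC : ∀ a : E, D a = 0 → a ∈ F)
    {n : ℕ} (x : Fin n → E) (hx : ∀ i, D (x i) ∈ F) :
    AlgebraicIndependent F x ∨
      (∃ c : Fin n → E, (∀ i, c i ∈ C) ∧ c ≠ 0 ∧ (∑ i, c i * x i) ∈ F) := by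
  refine or_iff_not_imp_left.2 fun hdep => ?_
  set I := LinearMap.ker (aeval x : MvPolynomial (Fin n) F →ₐ[F] E).toLinearMap
  have hI : I ≠ ⊥ := fun h => hdep (LinearMap.ker_eq_bot.1 h)
  have hI_prolong (p : MvPolynomial (Fin n) F) (hp : p ∈ I) :
      prolong (hD.restrict hF) (fun i => ⟨D (x i), hx i⟩) p ∈ I := by
    rw [LinearMap.mem_ker, AlgHom.toLinearMap_apply] at hp ⊢
    rw [aeval_prolong hD hF hx, hp, hD.map_zero]
  obtain ⟨p, hp, μ, hμ, hpμ, hprolong⟩ :=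
    exists_prolong_eq_zero (hD.restrict_one hF) _ hI_prolong hI
  have hμ0 : μ ≠ 0 := by
    rintro rfl
    have : p = 1 := by
      rw [(totalDegree_eq_zero_iff_eq_C (p := p)).1 (by simpa using hμ.symm), hpμ, C_1]
    simp [I, this] at hp
  obtain ⟨c, hc, hc0, hsum⟩ :=
    exists_const_sum_mul_mem_of_prolong_eq_zero hD hF hx hNNC hprolong hμ hpμ hμ0
  exact ⟨c, fun j => (hC _).2 (hc j), hc0, hsum⟩

/-- **Ostrowski's theorem for antiderivatives.**  Let `F` be a characteristic-zero
differential field whose field of constants `C` is algebraically closed, and let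
`E ⊇ F` be a no-new-constants differential field extension.  If `x₁, …, xₙ ∈ E`
satisfy `xᵢ' ∈ F`, then either the `xᵢ` are algebraically independent over `F`, or
some nontrivial `C`-linear combination `Σ cᵢ xᵢ` lies in `F`. -/
theorem ostrowski_antiderivatives
    {E : Type*} [Field E] [CharZero E]
    (D : E → E) (hD : IsDerivation D)
    (F : Subfield E) (hF : ∀ a ∈ F, D a ∈ F)
    (C : Subfield E) (hC : ∀ c : E, c ∈ C ↔ (c ∈ F ∧ D c = 0))
    [IsAlgClosed C]
    (hNNC : ∀ a : E, D a = 0 → a ∈ F)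
    {n : ℕ} (x : Fin n → E) (hx : ∀ i, D (x i) ∈ F) :
    AlgebraicIndependent F x ∨
      (∃ c : Fin n → E, (∀ i, c i ∈ C) ∧ c ≠ 0 ∧ (∑ i, c i * x i) ∈ F) :=
  ostrowski_antiderivatives_general D hD F hF C hC hNNC x hx
end

section
/- Let U be a characteristic-zero differential field whose field of constants C is algebraically closed, let F ⊆ U be a differential subfield whose field of constants is also C, and let M and E be differential subfields of U containing F. Suppose E is a tower of extensions by antiderivatives over F, i.e. there are differential subfields F = E_0 ⊆ E_1 ⊆ ⋯ ⊆ E_n = E such that for each i ≥ 1, E_i is generated as a field over E_{i−1} by finitely many elements whose derivatives lie in E_{i−1}. Then any u ∈ E that is algebraic over M lies in M. -/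
/-!
The constants of `U` lie in `C ⊆ F ⊆ M`. Adjoin the antiderivatives of the tower one at a time
to `M`, keeping the invariant that the current field `K` is a differential field in which `M` is
algebraically closed. For an antiderivative `t` of `K` there are two cases. If `t` is
transcendental over `K`, then `K` is algebraically closed in `K(t) ≃ K(X)`. If `t` is algebraic
over `K` with minimal polynomial `Xⁿ + a Xⁿ⁻¹ + ⋯`, then differentiating `p(t) = 0` gives a
polynomial relation of degree `< n`, which must vanish; its top coefficient says that `n t + a`
is a constant, hence lies in `K`, and so does `t`.
-/

open Polynomial Differential IntermediateField

theorem Polynomial.Monic.degree_mapCoeffs_add_derivative_mul_C_lt {A : Type*} [CommRing A]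
    [Nontrivial A] [Differential A] {p : A[X]} (hp : p.Monic) (a : A) :
    (mapCoeffs p + derivative p * C a).degree < p.degree := by
  rw [degree_eq_natDegree hp.ne_zero, degree_lt_iff_coeff_zero]
  intro m hm
  have hcoeff : (p.coeff m)′ = 0 := by
    rcases hm.eq_or_lt with rfl | hm
    · rw [hp.coeff_natDegree, Derivation.map_one_eq_zero]
    · rw [coeff_eq_zero_of_natDegree_lt hm, Derivation.map_zero]
  simp [coeff_derivative, hcoeff, coeff_eq_zero_of_natDegree_lt (Nat.lt_succ_of_le hm)]

theorem Differential.mem_range_of_isAlgebraic_of_deriv_mem_range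
    {F K : Type*} [Field F] [Field K] [CharZero F] [Differential F] [Differential K]
    [Algebra F K] [DifferentialAlgebra F K] [ContainConstants F K]
    {x : K} (hx : IsAlgebraic F x) (hx' : x′ ∈ (algebraMap F K).range) :
    x ∈ (algebraMap F K).range := by
  obtain ⟨a, ha⟩ := hx'
  set p := minpoly F x
  have hp : p.Monic := minpoly.monic hx.isIntegral
  set q : F[X] := mapCoeffs p + derivative p * C a
  have hqx : aeval x q = 0 := by
    have := deriv_aeval_eq x p
    rw [show aeval x p = 0 from minpoly.aeval F x, Derivation.map_zero, ← ha] at this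
    simp [q, this]
  have hq : q = 0 := by
    by_contra hq
    exact (minpoly.degree_le_of_ne_zero F x hq hqx).not_gt
      (hp.degree_mapCoeffs_add_derivative_mul_C_lt a)
  set n := p.natDegree
  have hn : n ≠ 0 := (minpoly.natDegree_pos hx.isIntegral).ne'
  obtain ⟨m, hm⟩ : ∃ m, n = m + 1 := ⟨n - 1, by omega⟩
  -- The coefficient of `X ^ (n - 1)` in `q` shows that `n * x + p.coeff (n - 1)` is a constant.
  have hconst : (algebraMap F K (p.coeff m) + n * x)′ = 0 := by
    have hcoeff := congr(coeff $hq m)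
    simp only [q, coeff_add, coeff_mapCoeffs, coeff_mul_C, coeff_derivative, coeff_zero] at hcoeff
    rw [← hm, hp.coeff_natDegree, one_mul] at hcoeff
    simpa [Derivation.leibniz, deriv_algebraMap, ← ha, hm] using congr(algebraMap F K $hcoeff)
  obtain ⟨b, hb⟩ := mem_range_of_deriv_eq_zero F hconst
  have : CharZero K := charZero_of_injective_algebraMap (algebraMap F K).injective
  have : (n : K) ≠ 0 := Nat.cast_ne_zero.mpr hn
  exact ⟨(b - p.coeff m) / n, by simp [hb, this]⟩

theorem Transcendental.mem_bot_of_mem_adjoin_simple_of_isAlgebraic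
    {F E : Type*} [Field F] [Field E] [Algebra F E] {t x : E} (ht : Transcendental F t)
    (hxt : x ∈ F⟮t⟯) (hx : IsAlgebraic F x) : x ∈ (⊥ : IntermediateField F E) := by
  set e := RatFunc.algEquivOfTranscendental t ht
  have hu : IsAlgebraic F (e.symm ⟨x, hxt⟩) :=
    ((isAlgebraic_algHom_iff F⟮t⟯.val Subtype.val_injective (a := ⟨x, hxt⟩)).mp hx).algHom
      e.symm.toAlgHom
  obtain ⟨c, hc⟩ : ∃ c, e.symm ⟨x, hxt⟩ = RatFunc.C c := by
    by_contra h
    exact RatFunc.transcendental_of_ne_C _ h hu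
  refine mem_bot.mpr ⟨c, ?_⟩
  simpa [← RatFunc.algebraMap_eq_C] using congr(F⟮t⟯.val (e $hc)).symm

theorem IsAlgebraic.tower_top_of_subfield_le {L : Type*} [Field L] {M K : Subfield L}
    (hle : M ≤ K) {x : L} (h : IsAlgebraic M x) : IsAlgebraic K x := by
  let : Algebra M K := (Subfield.inclusion hle).toAlgebra
  have : IsScalarTower M K L := .of_algebraMap_eq fun _ ↦ rfl
  exact h.extendScalars (Subfield.inclusion hle).injective

def IsDerivation.toDerivation_s12 {U : Type*} [Field U] {D : U → U} (hD : IsDerivation D) :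
    Derivation ℤ U U :=
  .mk' (AddMonoidHom.mk' D hD.map_add).toIntLinearMap fun a b ↦ by
    simp [hD.leibniz, mul_comm, add_comm]

section DifferentialSubfield

variable {L : Type*} [Field L] [Differential L]

@[reducible]
def Subfield.differential (K : Subfield L) (hK : ∀ a ∈ K, a′ ∈ K) : Differential K where
  deriv :=
    { toFun a := ⟨a.1′, hK _ a.2⟩
      map_add' a b := Subtype.ext (Derivation.map_add deriv a.1 b.1)
      map_smul' n a := Subtype.ext (Derivation.map_smul deriv n a.1)
      map_one_eq_zero' := Subtype.ext (Derivation.map_one_eq_zero deriv)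
      leibniz' a b := Subtype.ext (Derivation.leibniz deriv a.1 b.1) }

theorem Subfield.differentialAlgebra (K : Subfield L) (hK : ∀ a ∈ K, a′ ∈ K) :
    letI := K.differential hK
    DifferentialAlgebra K L :=
  letI := K.differential hK
  { deriv_algebraMap := fun _ ↦ rfl }

theorem Subfield.deriv_mem_closure {s : Set L} (hs : ∀ a ∈ s, a′ ∈ closure s) :
    ∀ x ∈ closure s, x′ ∈ closure s := by
  intro x hx
  induction hx using Subfield.closure_induction with
  | mem a ha => exact hs a ha
  | one => simp
  | add a b _ _ ha hb => simpa using add_mem ha hb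
  | neg a _ ha => simpa using neg_mem ha
  | inv a ha ha' =>
    rw [Derivation.leibniz_inv, smul_eq_mul]
    exact mul_mem (neg_mem (pow_mem (inv_mem ha) 2)) ha'
  | mul a b ha hb ha' hb' =>
    rw [Derivation.leibniz]
    exact add_mem (mul_mem ha hb') (mul_mem hb ha')

theorem Subfield.mem_of_isAlgebraic_of_deriv_mem [CharZero L] {K : Subfield L}
    (hK : ∀ a ∈ K, a′ ∈ K) (hconst : ∀ x : L, x′ = 0 → x ∈ K) {t : L} (ht : t′ ∈ K)
    (halg : IsAlgebraic K t) : t ∈ K := by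
  let := K.differential hK
  have := K.differentialAlgebra hK
  have : ContainConstants K L := ⟨fun hx ↦ ⟨⟨_, hconst _ hx⟩, rfl⟩⟩
  obtain ⟨⟨y, hy⟩, rfl⟩ := mem_range_of_isAlgebraic_of_deriv_mem_range halg ⟨⟨t′, ht⟩, rfl⟩
  exact hy

theorem Subfield.mem_of_mem_closure_antideriv_of_isAlgebraic [CharZero L] {K : Subfield L}
    (hK : ∀ a ∈ K, a′ ∈ K) (hconst : ∀ x : L, x′ = 0 → x ∈ K) {t : L} (ht : t′ ∈ K)
    {x : L} (hx : x ∈ closure (K ∪ {t})) (halg : IsAlgebraic K x) : x ∈ K := by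
  by_cases htK : IsAlgebraic K t
  · have : closure (K ∪ {t}) ≤ K :=
      closure_le.mpr (Set.union_subset le_rfl (Set.singleton_subset_iff.mpr
        (mem_of_isAlgebraic_of_deriv_mem hK hconst ht htK)))
    exact this hx
  · have hxt : x ∈ K⟮t⟯ := by
      rwa [← mem_toSubfield, adjoin_toSubfield, show Set.range (algebraMap K L) = K from
        Subtype.range_val]
    obtain ⟨y, rfl⟩ :=
      mem_bot.mp (Transcendental.mem_bot_of_mem_adjoin_simple_of_isAlgebraic htK hxt halg)
    exact y.2

structure IsAlgClosedDiffExt (M K : Subfield L) : Prop where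
  le : M ≤ K
  deriv_mem : ∀ a ∈ K, a′ ∈ K
  mem_of_isAlgebraic : ∀ x ∈ K, IsAlgebraic M x → x ∈ M

namespace IsAlgClosedDiffExt

variable {M K : Subfield L}

theorem refl (hM : ∀ a ∈ M, a′ ∈ M) : IsAlgClosedDiffExt M M :=
  ⟨le_rfl, hM, fun _ hx _ ↦ hx⟩

theorem closure_union_singleton [CharZero L] (hconst : ∀ x : L, x′ = 0 → x ∈ M)
    (hK : IsAlgClosedDiffExt M K) {t : L} (ht : t′ ∈ K) :
    IsAlgClosedDiffExt M (Subfield.closure (K ∪ {t})) where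
  le x hx := Subfield.subset_closure (Or.inl (hK.le hx))
  deriv_mem := Subfield.deriv_mem_closure <| by
    rintro a (ha | rfl)
    · exact Subfield.subset_closure (Or.inl (hK.deriv_mem a ha))
    · exact Subfield.subset_closure (Or.inl ht)
  mem_of_isAlgebraic x hx halg := hK.mem_of_isAlgebraic x
    (Subfield.mem_of_mem_closure_antideriv_of_isAlgebraic hK.deriv_mem
      (fun y hy ↦ hK.le (hconst y hy)) ht hx (halg.tower_top_of_subfield_le hK.le)) halg

theorem closure_union_finset [CharZero L] (hconst : ∀ x : L, x′ = 0 → x ∈ M)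
    (hK : IsAlgClosedDiffExt M K) (s : Finset L) (hs : ∀ a ∈ s, a′ ∈ K) :
    IsAlgClosedDiffExt M (Subfield.closure (K ∪ s)) := by
  classical
  induction s using Finset.induction_on generalizing K with
  | empty => simpa using hK
  | insert a s _ ih =>
    have hKa := hK.closure_union_singleton hconst (hs a (Finset.mem_insert_self a s))
    have hKas := ih hKa fun b hb ↦
      Subfield.subset_closure (Or.inl (hs b (Finset.mem_insert_of_mem hb)))
    rwa [Subfield.closure_union, Subfield.closure_eq, ← Subfield.closure_union,
      Set.union_singleton, Set.insert_union, ← Set.union_insert, ← Finset.coe_insert] at hKas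

end IsAlgClosedDiffExt

end DifferentialSubfield

theorem tower_of_antiderivatives_algebraic_mem_general
    {U : Type*} [Field U] [CharZero U]
    (D : U → U) (hD : IsDerivation D)
    (C : Subfield U) (hC : ∀ c : U, c ∈ C ↔ D c = 0)
    (F : Subfield U) (hCF : C ≤ F)
    (M : Subfield U) (hFM : F ≤ M) (hM : ∀ a ∈ M, D a ∈ M)
    {n : ℕ} (Etow : Fin (n + 1) → Subfield U)
    (hE0 : Etow 0 = F)
    (hstep : ∀ i : Fin n, ∃ s : Finset U,
      (∀ a ∈ s, D a ∈ Etow i.castSucc) ∧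
      Etow i.succ = Subfield.closure (↑(Etow i.castSucc) ∪ ↑s))
    (u : U) (hu : u ∈ Etow (Fin.last n)) (halg : IsAlgebraic M u) :
    u ∈ M := by
  let : Differential U := ⟨hD.toDerivation_s12⟩
  have hconst : ∀ x : U, x′ = 0 → x ∈ M := fun x hx ↦ hFM (hCF ((hC x).mpr hx))
  have hinv : ∀ i, ∃ K, Etow i ≤ K ∧ IsAlgClosedDiffExt M K := by
    intro i
    induction i using Fin.induction with
    | zero => exact ⟨M, hE0 ▸ hFM, .refl hM⟩
    | succ i ih =>
      obtain ⟨K, hEK, hK⟩ := ih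
      obtain ⟨s, hs, hEs⟩ := hstep i
      refine ⟨_, ?_, hK.closure_union_finset hconst s fun a ha ↦ hEK (hs a ha)⟩
      rw [hEs]
      exact Subfield.closure_mono (Set.union_subset_union_left _ hEK)
  obtain ⟨K, hEK, hK⟩ := hinv (Fin.last n)
  exact hK.mem_of_isAlgebraic u (hEK hu) halg

/-- Let `U` be a characteristic-zero differential field whose field of constants `C`
is algebraically closed, let `F ⊆ U` be a differential subfield whose constants are
also `C`, and let `M` be a differential subfield of `U` containing `F`.  Suppose
`F = E₀ ⊆ E₁ ⊆ ⋯ ⊆ Eₙ = E` is a tower of differential subfields where each `Eᵢ` is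
generated as a field over `Eᵢ₋₁` by finitely many antiderivatives of `Eᵢ₋₁`.  Then
any element of `E` algebraic over `M` lies in `M`. -/
theorem tower_of_antiderivatives_algebraic_mem
    {U : Type*} [Field U] [CharZero U]
    (D : U → U) (hD : IsDerivation D)
    (C : Subfield U) (hC : ∀ c : U, c ∈ C ↔ D c = 0)
    [IsAlgClosed C]
    (F : Subfield U) (hF : ∀ a ∈ F, D a ∈ F) (hCF : C ≤ F)
    (M : Subfield U) (hFM : F ≤ M) (hM : ∀ a ∈ M, D a ∈ M)
    {n : ℕ} (Etow : Fin (n + 1) → Subfield U)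
    (hE0 : Etow 0 = F)
    (hEdiff : ∀ i, ∀ a ∈ Etow i, D a ∈ Etow i)
    (hstep : ∀ i : Fin n, ∃ s : Finset U,
      (∀ a ∈ s, D a ∈ Etow i.castSucc) ∧
      Etow i.succ = Subfield.closure (↑(Etow i.castSucc) ∪ ↑s))
    (u : U) (hu : u ∈ Etow (Fin.last n)) (halg : IsAlgebraic M u) :
    u ∈ M :=
  tower_of_antiderivatives_algebraic_mem_general D hD C hC F hCF M hFM hM Etow hE0 hstep u hu halg
end
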